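/- Let X, Y be Banach spaces, (E_k) a sequence of finite-dimensional subspaces of X with d(E_k) → ∞, and η > 0 with ‖T x‖ ≥ η‖x‖ for all x ∈ E_k and all k, where T : X → Y has ‖T‖ ≤ 1. If S : X → Y is any operator with sup_k γ₂(S|_{E_k}) / d(E_k) → 0 (i.e., the γ₂ constants of S restricted to E_k grow slower than d(E_k)), then ‖T − S‖ ≥ η/2. -/
import Mathlib


/-- A factorization `T = A ∘ B` of an operator through a (real) Hilbert space `H`. -/
structure HilbertFactorization {X Y : Type} [NormedAddCommGroup X] [NormedSpace ℝ X]
    [NormedAddCommGroup Y] [NormedSpace ℝ Y] (T : X →L[ℝ] Y) where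
  H : Type
  [grp : NormedAddCommGroup H]
  [ip : InnerProductSpace ℝ H]
  B : X →L[ℝ] H
  A : H →L[ℝ] Y
  eq : A.comp B = T

/-- The quantity `‖A‖ * ‖B‖` of a Hilbert space factorization. -/
noncomputable def HilbertFactorization.c {X Y : Type} [NormedAddCommGroup X]
    [NormedSpace ℝ X] [NormedAddCommGroup Y] [NormedSpace ℝ Y] {T : X →L[ℝ] Y}
    (F : HilbertFactorization T) : ℝ :=
  letI := F.grp
  letI := F.ip
  ‖F.A‖ * ‖F.B‖

/-- The factorization constant `γ₂(T)` of an operator through Hilbert space. -/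
noncomputable def gamma2 {X Y : Type} [NormedAddCommGroup X] [NormedSpace ℝ X]
    [NormedAddCommGroup Y] [NormedSpace ℝ Y] (T : X →L[ℝ] Y) : ℝ :=
  sInf (Set.range fun F : HilbertFactorization T => F.c)

/-- The Banach–Mazur distance of a normed space `E` from the Euclidean space of its
(finite) dimension: the infimum of `‖u‖ * ‖u⁻¹‖` over isomorphisms. -/
noncomputable def euclDist (E : Type) [NormedAddCommGroup E] [NormedSpace ℝ E] : ℝ :=
  sInf {c : ℝ | ∃ u : E ≃L[ℝ] EuclideanSpace ℝ (Fin (Module.finrank ℝ E)),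
    c = ‖(u : E →L[ℝ] EuclideanSpace ℝ (Fin (Module.finrank ℝ E)))‖ *
        ‖(u.symm : EuclideanSpace ℝ (Fin (Module.finrank ℝ E)) →L[ℝ] E)‖}

/-- A (two-sided, not necessarily closed) ideal in the algebra `L(X)`. -/
def IsOpIdeal {X : Type} [NormedAddCommGroup X] [NormedSpace ℝ X]
    (I : Set (X →L[ℝ] X)) : Prop :=
  (0 : X →L[ℝ] X) ∈ I ∧ (∀ S ∈ I, ∀ T ∈ I, S + T ∈ I) ∧
    (∀ c : ℝ, ∀ S ∈ I, c • S ∈ I) ∧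
    ∀ A : X →L[ℝ] X, ∀ S ∈ I, A.comp S ∈ I ∧ S.comp A ∈ I

/-- A closed two-sided ideal in the Banach algebra `L(X)`. -/
def IsClosedOpIdeal {X : Type} [NormedAddCommGroup X] [NormedSpace ℝ X]
    (I : Set (X →L[ℝ] X)) : Prop :=
  IsClosed I ∧ IsOpIdeal I

lemma euclDist_le {E : Type} [NormedAddCommGroup E] [NormedSpace ℝ E]
    (u : E ≃L[ℝ] EuclideanSpace ℝ (Fin (Module.finrank ℝ E))) :
    euclDist E ≤ ‖(u : E →L[ℝ] EuclideanSpace ℝ (Fin (Module.finrank ℝ E)))‖ *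
        ‖(u.symm : EuclideanSpace ℝ (Fin (Module.finrank ℝ E)) →L[ℝ] E)‖ := by
  apply csInf_le
  · refine ⟨0, ?_⟩
    rintro c ⟨v, rfl⟩
    positivity
  · exact ⟨u, rfl⟩

lemma gamma2_nonneg {X Y : Type} [NormedAddCommGroup X] [NormedSpace ℝ X]
    [NormedAddCommGroup Y] [NormedSpace ℝ Y] (T : X →L[ℝ] Y) : 0 ≤ gamma2 T := by
  apply Real.sInf_nonneg
  rintro x ⟨F, rfl⟩
  letI := F.grp
  letI := F.ip
  exact mul_nonneg (norm_nonneg _) (norm_nonneg _)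

noncomputable def factorizationOfFinDim {E Y : Type} [NormedAddCommGroup E]
    [NormedSpace ℝ E] [FiniteDimensional ℝ E] [NormedAddCommGroup Y] [NormedSpace ℝ Y]
    (R : E →L[ℝ] Y) : HilbertFactorization R := by
  have h : Module.finrank ℝ E =
      Module.finrank ℝ (EuclideanSpace ℝ (Fin (Module.finrank ℝ E))) := by
    simp [finrank_euclideanSpace_fin]
  let u := (LinearEquiv.ofFinrankEq _ _ h).toContinuousLinearEquiv
  exact ⟨EuclideanSpace ℝ (Fin (Module.finrank ℝ E)),
    (u : E →L[ℝ] _), R.comp (u.symm : _ →L[ℝ] E), by ext x; simp⟩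

set_option maxHeartbeats 1000000 in
lemma fact_bound {E Y H : Type} [NormedAddCommGroup E] [NormedSpace ℝ E]
    [FiniteDimensional ℝ E] [NormedAddCommGroup Y] [NormedSpace ℝ Y]
    [NormedAddCommGroup H] [InnerProductSpace ℝ H]
    (R : E →L[ℝ] Y) (B : E →L[ℝ] H) (A : H →L[ℝ] Y) (heq : A.comp B = R)
    (a : ℝ) (ha : 0 < a) (hbound : ∀ x, a * ‖x‖ ≤ ‖R x‖) :
    a * euclDist E ≤ ‖A‖ * ‖B‖ := by
  have hAB : ∀ x : E, A (B x) = R x := by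
    intro x
    rw [← heq]; rfl
  rcases subsingleton_or_nontrivial E with hE | hE
  · -- trivial case: euclDist E = 0
    have h0 : Module.finrank ℝ E =
        Module.finrank ℝ (EuclideanSpace ℝ (Fin (Module.finrank ℝ E))) := by
      simp [finrank_euclideanSpace_fin]
    let u := (LinearEquiv.ofFinrankEq E _ h0).toContinuousLinearEquiv
    have h1 : ‖(u : E →L[ℝ] EuclideanSpace ℝ (Fin (Module.finrank ℝ E)))‖ ≤ 0 := by
      apply ContinuousLinearMap.opNorm_le_bound _ le_rfl
      intro x
      have : x = 0 := Subsingleton.elim x 0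
      simp [this]
    have h2 := euclDist_le u
    have h3 : (0:ℝ) ≤ euclDist E := by
      apply Real.sInf_nonneg
      rintro c ⟨v, rfl⟩; positivity
    have h4 : euclDist E = 0 := by
      nlinarith [norm_nonneg (u.symm : EuclideanSpace ℝ (Fin (Module.finrank ℝ E)) →L[ℝ] E),
        norm_nonneg (u : E →L[ℝ] EuclideanSpace ℝ (Fin (Module.finrank ℝ E)))]
    rw [h4, mul_zero]
    positivity
  · -- nontrivial case
    have hAinj : ∀ x : E, a * ‖x‖ ≤ ‖A‖ * ‖B x‖ := fun x => by
      calc a * ‖x‖ ≤ ‖R x‖ := hbound x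
        _ = ‖A (B x)‖ := by rw [hAB]
        _ ≤ ‖A‖ * ‖B x‖ := A.le_opNorm _
    have hApos : 0 < ‖A‖ := by
      obtain ⟨x, hx⟩ := exists_ne (0 : E)
      have := hAinj x
      have hxn : 0 < ‖x‖ := norm_pos_iff.mpr hx
      nlinarith [norm_nonneg (B x), norm_nonneg A]
    have hinj : Function.Injective B.toLinearMap := by
      intro x y hxy
      have hz : B (x - y) = 0 := by
        simp only [map_sub]
        rw [show B x = B y from hxy]; simp
      have h5 := hAinj (x - y)
      rw [hz] at h5
      simp only [norm_zero, mul_zero] at h5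
      have h6 : ‖x - y‖ ≤ 0 := by nlinarith
      have h7 : x - y = 0 := by rw [← norm_le_zero_iff]; exact h6
      exact sub_eq_zero.mp h7
    haveI : FiniteDimensional ℝ (LinearMap.range B.toLinearMap) :=
      LinearMap.finiteDimensional_range _
    let e : E ≃ₗ[ℝ] LinearMap.range B.toLinearMap := LinearEquiv.ofInjective B.toLinearMap hinj
    have hfr : Module.finrank ℝ E = Module.finrank ℝ (LinearMap.range B.toLinearMap) :=
      e.finrank_eq
    let ec : E ≃L[ℝ] LinearMap.range B.toLinearMap := e.toContinuousLinearEquiv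
    let V : (LinearMap.range B.toLinearMap) ≃ₗᵢ[ℝ] EuclideanSpace ℝ (Fin (Module.finrank ℝ E)) :=
      ((stdOrthonormalBasis ℝ (LinearMap.range B.toLinearMap)).reindex (finCongr hfr.symm)).repr
    let u : E ≃L[ℝ] EuclideanSpace ℝ (Fin (Module.finrank ℝ E)) :=
      ec.trans V.toContinuousLinearEquiv
    have hux : ∀ x : E, ‖u x‖ = ‖B x‖ := by
      intro x
      show ‖V (ec x)‖ = ‖B x‖
      rw [V.norm_map]
      show ‖((ec x : LinearMap.range B.toLinearMap) : H)‖ = ‖B x‖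
      have h8 : ((ec x : LinearMap.range B.toLinearMap) : H) = B x := by
        show ((e x : LinearMap.range B.toLinearMap) : H) = B x
        exact LinearEquiv.ofInjective_apply _ _
      rw [h8]
    have h1 : ‖(u : E →L[ℝ] EuclideanSpace ℝ (Fin (Module.finrank ℝ E)))‖ ≤ ‖B‖ := by
      apply ContinuousLinearMap.opNorm_le_bound _ (norm_nonneg B)
      intro x
      show ‖u x‖ ≤ ‖B‖ * ‖x‖
      rw [hux]
      exact B.le_opNorm x
    have h2 : ‖(u.symm : EuclideanSpace ℝ (Fin (Module.finrank ℝ E)) →L[ℝ] E)‖ ≤ ‖A‖ / a := by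
      apply ContinuousLinearMap.opNorm_le_bound _ (by positivity)
      intro y
      show ‖u.symm y‖ ≤ ‖A‖ / a * ‖y‖
      have h9 := hAinj (u.symm y)
      rw [← hux (u.symm y), u.apply_symm_apply] at h9
      rw [div_mul_eq_mul_div, le_div_iff₀ ha]
      nlinarith
    have h3 := euclDist_le u
    have h4 : euclDist E ≤ ‖B‖ * (‖A‖ / a) :=
      h3.trans (mul_le_mul h1 h2 (norm_nonneg _) (norm_nonneg _))
    calc a * euclDist E ≤ a * (‖B‖ * (‖A‖ / a)) := mul_le_mul_of_nonneg_left h4 ha.le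
      _ = ‖A‖ * ‖B‖ := by field_simp

lemma gamma2_lower {E Y : Type} [NormedAddCommGroup E] [NormedSpace ℝ E]
    [FiniteDimensional ℝ E] [NormedAddCommGroup Y] [NormedSpace ℝ Y]
    (R : E →L[ℝ] Y) (a : ℝ) (ha : 0 < a)
    (hbound : ∀ x, a * ‖x‖ ≤ ‖R x‖) : a * euclDist E ≤ gamma2 R := by
  haveI : Nonempty (HilbertFactorization R) := ⟨factorizationOfFinDim R⟩
  rw [gamma2]
  apply le_csInf (Set.range_nonempty _)
  rintro c ⟨F, rfl⟩
  letI := F.grp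
  letI := F.ip
  exact fact_bound R F.B F.A F.eq a ha hbound

/-- If `T` has norm at most one and is an `η`-isomorphism on finite dimensional
subspaces `E_k` with `d(E_k) → ∞`, while `γ₂(S|_{E_k}) / d(E_k) → 0`, then
`‖T − S‖ ≥ η/2`. -/
theorem stmt_17 (X Y : Type) [NormedAddCommGroup X] [NormedSpace ℝ X] [CompleteSpace X]
    [NormedAddCommGroup Y] [NormedSpace ℝ Y] [CompleteSpace Y]
    (E : ℕ → Submodule ℝ X) (hfin : ∀ k, FiniteDimensional ℝ (E k))
    (hd : Filter.Tendsto (fun k => euclDist (E k)) Filter.atTop Filter.atTop)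
    (T : X →L[ℝ] Y) (hT : ‖T‖ ≤ 1) (η : ℝ) (hη : 0 < η)
    (hiso : ∀ k, ∀ x ∈ E k, η * ‖x‖ ≤ ‖T x‖)
    (S : X →L[ℝ] Y)
    (hS : Filter.Tendsto (fun k => gamma2 (S.comp (E k).subtypeL) / euclDist (E k))
      Filter.atTop (nhds 0)) :
    η / 2 ≤ ‖T - S‖ := by
  by_contra hcon
  push_neg at hcon
  -- lower bound for S on each E k
  have hSlb : ∀ k, ∀ x : (E k), η / 2 * ‖x‖ ≤ ‖(S.comp (E k).subtypeL) x‖ := by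
    intro k x
    have h1 : η * ‖(x : X)‖ ≤ ‖T x‖ := hiso k x x.2
    have h2 : ‖(T - S) (x : X)‖ ≤ ‖T - S‖ * ‖(x : X)‖ := (T - S).le_opNorm _
    have h3 : ‖T (x : X)‖ - ‖S (x : X)‖ ≤ ‖(T - S) (x : X)‖ := by
      have : (T - S) (x : X) = T x - S x := rfl
      rw [this]
      exact norm_sub_norm_le _ _
    have h4 : ‖T - S‖ * ‖(x : X)‖ ≤ η / 2 * ‖(x : X)‖ :=
      mul_le_mul_of_nonneg_right hcon.le (norm_nonneg _)
    have h5 : ‖x‖ = ‖(x : X)‖ := rfl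
    have h6 : (S.comp (E k).subtypeL) x = S (x : X) := rfl
    rw [h5, h6]
    linarith
  have hkey : ∀ k, η / 2 * euclDist (E k) ≤ gamma2 (S.comp (E k).subtypeL) := by
    intro k
    haveI := hfin k
    exact gamma2_lower _ (η / 2) (by linarith) (hSlb k)
  have hev : ∀ᶠ k in Filter.atTop, η / 2 ≤
      gamma2 (S.comp (E k).subtypeL) / euclDist (E k) := by
    filter_upwards [hd.eventually_ge_atTop 1] with k hk
    have hdpos : 0 < euclDist (E k) := by linarith
    rw [le_div_iff₀ hdpos]
    exact hkey k
  have : η / 2 ≤ 0 := ge_of_tendsto hS hev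
  linarith
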